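/- Under Hypothesis (H1), for each θ with 0 < θ < 1/(2β) the operator P_θ is a well-defined bounded linear operator from C^0(X) to C^0(X): one has ‖P_θ h‖_{C^0} ≤ ‖h‖_{C^0} · ‖e^{θg}‖_{L^1(dx)}/(2σ)^n, and for all x, y ∈ X, |P_θ h(x) − P_θ h(y)| ≤ K ‖h‖_{C^0} · (‖e^{2θg}‖_{L^1(dx)})^{1/2} · (Leb(B_σ(f(x)) Δ B_σ(f(y))))^{1/2}, where Δ denotes symmetric difference; in particular P_θ h is continuous whenever h is. -/

import Mathlib

open MeasureTheory Metric Set Filter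
open scoped ENNReal NNReal symmDiff

noncomputable section

/-- Euclidean state space `ℝ^d`. -/
abbrev Ed (d : ℕ) := EuclideanSpace ℝ (Fin d)

/-- The noise cube `[-σ, σ]^d`. -/
def cube (d : ℕ) (σ : ℝ) : Set (Ed d) := {w | ∀ i, |w i| ≤ σ}

/-- The sup-norm cube of radius `σ` centred at `c`. -/
def cubeAt (d : ℕ) (c : Ed d) (σ : ℝ) : Set (Ed d) := {z | ∀ i, |z i - c i| ≤ σ}

/-- The uniform (normalized Lebesgue) probability measure on the noise cube. -/
def noiseMeasure (d : ℕ) (σ : ℝ) : Measure (Ed d) :=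
  (volume (cube d σ))⁻¹ • volume.restrict (cube d σ)

instance {d : ℕ} {σ : ℝ} : SFinite (noiseMeasure d σ) := by
  unfold noiseMeasure; infer_instance

/-- The one-sided shift on noise sequences. -/
def shft {d : ℕ} (ω : ℕ → Ed d) : ℕ → Ed d := fun n => ω (n + 1)

/-- Random compositions `f^n_ω(x)`, where `f_ω(x) = f(x) + ω 0`. -/
def RComp {d : ℕ} (f : Ed d → Ed d) : ℕ → (ℕ → Ed d) → Ed d → Ed d
  | 0, _, x => x
  | n + 1, ω, x => f (RComp f n ω x) + ω n

/-- The derivative cocycle `d f^n_ω (x)` built from a candidate derivative `Df`. -/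
def DComp {d : ℕ} (f : Ed d → Ed d) (Df : Ed d → Ed d →L[ℝ] Ed d) :
    ℕ → (ℕ → Ed d) → Ed d → (Ed d →L[ℝ] Ed d)
  | 0, _, _ => ContinuousLinearMap.id ℝ (Ed d)
  | n + 1, ω, x => (Df (RComp f n ω x)).comp (DComp f Df n ω x)

/-- The inverse derivative cocycle `(d f^n_ω (x))⁻¹`. -/
def DCompInv {d : ℕ} (f : Ed d → Ed d) (DfInv : Ed d → Ed d →L[ℝ] Ed d) :
    ℕ → (ℕ → Ed d) → Ed d → (Ed d →L[ℝ] Ed d)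
  | 0, _, _ => ContinuousLinearMap.id ℝ (Ed d)
  | n + 1, ω, x => (DCompInv f DfInv n ω x).comp (DfInv (RComp f n ω x))

/-- The `δ`-truncated distance to the critical set. -/
def distTrunc {d : ℕ} (Crit : Set (Ed d)) (δ : ℝ) (x : Ed d) : ℝ :=
  if δ < infDist x Crit then 1 else infDist x Crit

/-- Hypothesis (H1): regularity of `f` away from the critical set and structure and
non-degeneracy of the critical set. -/
structure H1Data (d : ℕ) where
  X : Set (Ed d)
  f : Ed d → Ed d
  Crit : Set (Ed d)
  Df : Ed d → Ed d →L[ℝ] Ed d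
  DfInv : Ed d → Ed d →L[ℝ] Ed d
  B : ℝ
  β : ℝ
  compact_X : IsCompact X
  cont_f : ContinuousOn f X
  one_lt_B : 1 < B
  beta_pos : 0 < β
  deriv : ∀ x ∈ X \ Crit, HasFDerivWithinAt f (Df x) X x
  inv_left : ∀ x ∈ X \ Crit, (DfInv x).comp (Df x) = ContinuousLinearMap.id ℝ (Ed d)
  inv_right : ∀ x ∈ X \ Crit, (Df x).comp (DfInv x) = ContinuousLinearMap.id ℝ (Ed d)
  deriv_bound : ∀ x ∈ X \ Crit, ∀ v : Ed d,
    B⁻¹ * infDist x Crit ^ β * ‖v‖ ≤ ‖Df x v‖ ∧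
      ‖Df x v‖ ≤ B * infDist x Crit ^ (-β) * ‖v‖
  logHolder_inv : ∀ x ∈ X \ Crit, ∀ y ∈ X \ Crit, dist x y ≤ infDist x Crit / 2 →
    |Real.log ‖DfInv x‖ - Real.log ‖DfInv y‖| ≤ B / infDist x Crit ^ β * dist x y
  logHolder_det : ∀ x ∈ X \ Crit, ∀ y ∈ X \ Crit, dist x y ≤ infDist x Crit / 2 →
    |Real.log (abs (Df x).det) - Real.log (abs (Df y).det)| ≤ B / infDist x Crit ^ β * dist x y
  crit_structure : ∃ (m : ℕ) (g : Fin m → ((Fin (d - 1) → ℝ) → Ed d)) (L : ℝ≥0),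
    (∀ i, ContDiff ℝ 1 (g i)) ∧ (∀ i, LipschitzWith L (g i)) ∧
    Crit ⊆ ⋃ i, g i '' (Set.univ.pi fun _ => Set.Icc (0 : ℝ) 1)

/-- iid uniform noise: cylinder events have product probabilities. -/
def IsIIDNoise {d : ℕ} (σn : ℝ) (P : Measure (ℕ → Ed d)) : Prop :=
  ∀ (m : ℕ) (s : Fin m → Set (Ed d)), (∀ i, MeasurableSet (s i)) →
    P {ω | ∀ i : Fin m, ω i.1 ∈ s i} = ∏ i, noiseMeasure d σn (s i)

/-- Hypothesis (H2): an invariant ergodic component `Y` carrying a stationary ergodic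
measure `μ` with `λ = ∫ log ‖df⁻¹‖ dμ < 0` (all Lyapunov exponents positive). -/
structure H2Data {d : ℕ} (D : H1Data d) (σn : ℝ) (P : Measure (ℕ → Ed d)) where
  Y : Set (Ed d)
  μ : ProbabilityMeasure (Ed d)
  subset_X : Y ⊆ D.X
  full : (μ : Measure (Ed d)) Y = 1
  stationary :
    Measure.map (fun p : Ed d × Ed d => D.f p.2 + p.1)
      ((noiseMeasure d σn).prod (μ : Measure (Ed d))) = (μ : Measure (Ed d))
  invariantY : ∀ x ∈ Y, ∀ᵐ w ∂(noiseMeasure d σn), D.f x + w ∈ Y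
  ergodic :
    Ergodic (fun p : (ℕ → Ed d) × Ed d => (shft p.1, D.f p.2 + p.1 0))
      (P.prod (μ : Measure (Ed d)))
  neg_lyap : ∫ x, Real.log ‖D.DfInv x‖ ∂(μ : Measure (Ed d)) < 0

/-- `n` is a `(σ'², r)`-hyperbolic time for `(ω, x)` (with recurrence exponent `b`). -/
def IsHypTime {d : ℕ} (f : Ed d → Ed d) (DfInv : Ed d → Ed d →L[ℝ] Ed d)
    (Crit : Set (Ed d)) (σ' r b : ℝ) (ω : ℕ → Ed d) (x : Ed d) (n : ℕ) : Prop :=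
  ∀ k < n,
    (∏ i ∈ Finset.Ico k n, ‖DfInv (RComp f i ω x)‖) ≤ σ' ^ (2 * (n - k)) ∧
    σ' ^ (b * ((n - k : ℕ) : ℝ)) ≤ distTrunc Crit r (RComp f (n - k) ω x)

/-- Greedy `N`-sparse selection from a set `H ⊆ ℕ` of times (`⊤` if exhausted). -/
def sparseTimes (H : Set ℕ) (N : ℕ) : ℕ → ℕ∞
  | 0 => sInf ((fun m : ℕ => (m : ℕ∞)) '' H)
  | k + 1 => sInf ((fun m : ℕ => (m : ℕ∞)) ''
      {m : ℕ | m ∈ H ∧ sparseTimes H N k + (N : ℕ∞) < (m : ℕ∞)})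

/-- `i` is an `N`-sparse `(σ'², r)`-hyperbolic time for `(ω, x)`. -/
def IsSparseHypTime {d : ℕ} (f : Ed d → Ed d) (DfInv : Ed d → Ed d →L[ℝ] Ed d)
    (Crit : Set (Ed d)) (σ' r b : ℝ) (N : ℕ) (ω : ℕ → Ed d) (x : Ed d) (i : ℕ) : Prop :=
  ∃ k : ℕ, sparseTimes {n : ℕ | IsHypTime f DfInv Crit σ' r b ω x n} N k = (i : ℕ∞)

/-- The event `E_J(I, N, ι)`: some ball `Ĩ ⊆ I` covers `J` within time `N`,
staying `ι`-away from the critical set. -/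
def coverEvent {d : ℕ} (f : Ed d → Ed d) (Crit : Set (Ed d)) (J : Set (Ed d))
    (N : ℕ) (ι : ℝ) (I : Set (Ed d)) : Set (ℕ → Ed d) :=
  {ω | ∃ i ≤ N, ∃ c : Ed d, ∃ r : ℝ, 0 < r ∧ Metric.ball c r ⊆ I ∧
    J ⊆ RComp f i ω '' Metric.ball c r ∧
    ∀ j ≤ i, ∀ x ∈ Metric.ball c r, ι < infDist (RComp f j ω x) Crit}

/-- `i` is a `(σ'², r)`-Young time for `(ω, x)`. -/
def IsYoungTime {d : ℕ} (f : Ed d → Ed d) (DfInv : Ed d → Ed d →L[ℝ] Ed d)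
    (Crit : Set (Ed d)) (σ' r b : ℝ) (N : ℕ) (J : Set (Ed d)) (ι δ1 : ℝ)
    (ω : ℕ → Ed d) (x : Ed d) (i : ℕ) : Prop :=
  IsSparseHypTime f DfInv Crit σ' r b N ω x i ∧
    shft^[i] ω ∈ coverEvent f Crit J N ι (Metric.ball (RComp f i ω x) δ1)

/-- `|Y_m(ω, x)|`: the number of Young times in `{1, …, m}`. -/
def youngCount {d : ℕ} (f : Ed d → Ed d) (DfInv : Ed d → Ed d →L[ℝ] Ed d)
    (Crit : Set (Ed d)) (σ' r b : ℝ) (N : ℕ) (J : Set (Ed d)) (ι δ1 : ℝ)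
    (ω : ℕ → Ed d) (x : Ed d) (m : ℕ) : ℕ :=
  {i : ℕ | 1 ≤ i ∧ i ≤ m ∧ IsYoungTime f DfInv Crit σ' r b N J ι δ1 ω x i}.ncard

/-- The transfer-type operator `P_θ` as a pointwise integral. -/
def transferFun {d : ℕ} (D : H1Data d) (σn θ : ℝ) (h : Ed d → ℝ) (x : Ed d) : ℝ :=
  ∫ w, Real.exp (θ * Real.log ‖D.DfInv (D.f x + w)‖) * h (D.f x + w) ∂(noiseMeasure d σn)

/-!
With `φ = exp (θ log ‖df⁻¹‖)`, translating the noise turns `P_θ h (x)` into `(2σ)⁻ᵈ ∫ φ h` over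
the cube of half-side `σ` centred at `f x`. By (H1), `φ ≤ B^θ dist(·, C)^(-θβ)`, and since `C` lies
in finitely many Lipschitz images of the unit cube of `ℝ^(d-1)`, the `t`-neighbourhood of `C` has
volume `O(t)`; a dyadic decomposition then makes `dist(·, C)^(-s)` integrable for `s < 1`, so
`φ` and `φ²` are integrable on `X` when `2θβ < 1`. The sup bound is then immediate. Two cube
integrals differ by an integral over the symmetric difference of the cubes, which Cauchy–Schwarz
bounds by `‖φ‖_{L²} Leb(Δ)^{1/2}`, and `Leb(Δ) → 0` by continuity of translation in measure.
-/

open scoped Topology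

section SetIntegral

variable {α : Type*} [MeasurableSpace α] {μ : Measure α}

theorem setIntegral_le_sqrt_mul_sqrt {S : Set α} {f : α → ℝ} (hf0 : ∀ z, 0 ≤ f z)
    (hf : AEStronglyMeasurable f (μ.restrict S)) (hf2 : IntegrableOn (fun z => f z ^ 2) S μ)
    (hS : μ S ≠ ⊤) :
    ∫ z in S, f z ∂μ ≤ √(∫ z in S, f z ^ 2 ∂μ) * √(μ S).toReal := by
  have : IsFiniteMeasure (μ.restrict S) := ⟨by simpa using hS.lt_top⟩
  have holder := integral_mul_le_Lp_mul_Lq_of_nonneg (μ := μ.restrict S) (f := f)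
    (g := fun _ => 1) Real.HolderConjugate.two_two (Eventually.of_forall hf0)
    (Eventually.of_forall fun _ => zero_le_one)
    (by simpa using (memLp_two_iff_integrable_sq hf).2 hf2) (by simpa using memLp_const 1)
  simpa [Real.sqrt_eq_rpow, Measure.real] using holder

theorem abs_setIntegral_le_setIntegral {S : Set α} {f g : α → ℝ} (hS : MeasurableSet S)
    (hg : IntegrableOn g S μ) (hfg : ∀ z ∈ S, |f z| ≤ g z) :
    |∫ z in S, f z ∂μ| ≤ ∫ z in S, g z ∂μ :=
  norm_integral_le_of_norm_le (f := f) hg (ae_restrict_of_forall_mem hS hfg)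

theorem abs_setIntegral_sub_setIntegral_le {A B : Set α} {f g : α → ℝ} (hA : MeasurableSet A)
    (hB : MeasurableSet B) (hfA : IntegrableOn f A μ) (hfB : IntegrableOn f B μ)
    (hg : IntegrableOn g (A ∆ B) μ) (hfg : ∀ z ∈ A ∆ B, |f z| ≤ g z) :
    |∫ z in A, f z ∂μ - ∫ z in B, f z ∂μ| ≤ ∫ z in A ∆ B, g z ∂μ := by
  have hAB : A \ B ⊆ A ∆ B := fun z hz => Or.inl hz
  have hBA : B \ A ⊆ A ∆ B := fun z hz => Or.inr hz
  have hsplit : ∫ z in A, f z ∂μ - ∫ z in B, f z ∂μ =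
      ∫ z in A \ B, f z ∂μ - ∫ z in B \ A, f z ∂μ := by
    rw [← integral_inter_add_sdiff hB hfA, ← integral_inter_add_sdiff hA hfB, inter_comm B A]
    ring
  rw [hsplit, Set.symmDiff_def, setIntegral_union disjoint_sdiff_sdiff (hB.diff hA)
    (hg.mono_set hAB) (hg.mono_set hBA)]
  calc |∫ z in A \ B, f z ∂μ - ∫ z in B \ A, f z ∂μ|
      ≤ |∫ z in A \ B, f z ∂μ| + |∫ z in B \ A, f z ∂μ| := abs_sub _ _
    _ ≤ ∫ z in A \ B, g z ∂μ + ∫ z in B \ A, g z ∂μ :=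
      add_le_add
        (abs_setIntegral_le_setIntegral (hA.diff hB) (hg.mono_set hAB) fun z hz => hfg z (hAB hz))
        (abs_setIntegral_le_setIntegral (hB.diff hA) (hg.mono_set hBA) fun z hz => hfg z (hBA hz))

end SetIntegral

section Domination

variable {α : Type*} [MeasurableSpace α] {μ : Measure α} {X A B : Set α} {f φ : α → ℝ} {M : ℝ}

theorem integrableOn_of_abs_le_mul (hφ : IntegrableOn φ X μ)
    (hf : AEStronglyMeasurable f (μ.restrict X)) (hfφ : ∀ z ∈ X, |f z| ≤ M * φ z)
    (hA : MeasurableSet A) (hAX : A ⊆ X) : IntegrableOn f A μ :=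
  ((hφ.mono_set hAX).const_mul M).mono' (hf.mono_measure (Measure.restrict_mono hAX le_rfl))
    (ae_restrict_of_forall_mem hA fun z hz => hfφ z (hAX hz))

theorem abs_setIntegral_le_mul_setIntegral (hM : 0 ≤ M) (hφ0 : ∀ z, 0 ≤ φ z)
    (hφ : IntegrableOn φ X μ) (hfφ : ∀ z ∈ X, |f z| ≤ M * φ z) (hA : MeasurableSet A)
    (hAX : A ⊆ X) : |∫ z in A, f z ∂μ| ≤ M * ∫ z in X, φ z ∂μ := by
  calc |∫ z in A, f z ∂μ| ≤ ∫ z in A, M * φ z ∂μ :=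
        abs_setIntegral_le_setIntegral hA ((hφ.mono_set hAX).const_mul M) fun z hz =>
          hfφ z (hAX hz)
    _ = M * ∫ z in A, φ z ∂μ := integral_const_mul M _
    _ ≤ M * ∫ z in X, φ z ∂μ := mul_le_mul_of_nonneg_left
        (setIntegral_mono_set hφ (Eventually.of_forall hφ0) hAX.eventuallyLE) hM

theorem abs_setIntegral_sub_setIntegral_le_mul_sqrt (hM : 0 ≤ M) (hφ0 : ∀ z, 0 ≤ φ z)
    (hφ : IntegrableOn φ X μ) (hφ2 : IntegrableOn (fun z => φ z ^ 2) X μ)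
    (hf : AEStronglyMeasurable f (μ.restrict X)) (hfφ : ∀ z ∈ X, |f z| ≤ M * φ z)
    (hA : MeasurableSet A) (hB : MeasurableSet B) (hAX : A ⊆ X) (hBX : B ⊆ X)
    (hX : μ X ≠ ⊤) :
    |∫ z in A, f z ∂μ - ∫ z in B, f z ∂μ| ≤
      M * √(∫ z in X, φ z ^ 2 ∂μ) * √(μ (A ∆ B)).toReal := by
  have hABX : A ∆ B ⊆ X := fun z hz => hz.elim (fun h => hAX h.1) (fun h => hBX h.1)
  calc |∫ z in A, f z ∂μ - ∫ z in B, f z ∂μ| ≤ ∫ z in A ∆ B, M * φ z ∂μ :=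
        abs_setIntegral_sub_setIntegral_le hA hB (integrableOn_of_abs_le_mul hφ hf hfφ hA hAX)
          (integrableOn_of_abs_le_mul hφ hf hfφ hB hBX) ((hφ.mono_set hABX).const_mul M)
          fun z hz => hfφ z (hABX hz)
    _ = M * ∫ z in A ∆ B, φ z ∂μ := integral_const_mul M _
    _ ≤ M * (√(∫ z in A ∆ B, φ z ^ 2 ∂μ) * √(μ (A ∆ B)).toReal) :=
        mul_le_mul_of_nonneg_left (setIntegral_le_sqrt_mul_sqrt hφ0
          (hφ.mono_set hABX).aestronglyMeasurable (hφ2.mono_set hABX)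
          (ne_top_of_le_ne_top hX (measure_mono hABX))) hM
    _ ≤ M * √(∫ z in X, φ z ^ 2 ∂μ) * √(μ (A ∆ B)).toReal := by
        rw [← mul_assoc]
        refine mul_le_mul_of_nonneg_right (mul_le_mul_of_nonneg_left (Real.sqrt_le_sqrt ?_) hM)
          (Real.sqrt_nonneg _)
        exact setIntegral_mono_set hφ2 (Eventually.of_forall fun z => sq_nonneg _)
          hABX.eventuallyLE

end Domination

section MinkowskiContent

variable {α : Type*} [PseudoMetricSpace α] {F : Set α} {C : ℝ}

theorem measure_eq_zero_of_measure_thickening_le [MeasurableSpace α] {μ : Measure α}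
    (hF : ∀ t, 0 < t → t ≤ 1 → μ (thickening t F) ≤ ENNReal.ofReal (C * t)) : μ F = 0 := by
  have hlim : Tendsto (fun t => ENNReal.ofReal (C * t)) (𝓝[>] 0) (𝓝 0) :=
    (ENNReal.continuous_ofReal.tendsto' _ _ (by simp)).comp
      ((continuous_const_mul C).tendsto' 0 0 (mul_zero C) |>.mono_left nhdsWithin_le_nhds)
  refine nonpos_iff_eq_zero.1 (ge_of_tendsto hlim ?_)
  filter_upwards [Ioc_mem_nhdsGT zero_lt_one] with t ht
  exact (measure_mono (self_subset_thickening ht.1 F)).trans (hF t ht.1 ht.2)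

theorem ofReal_infDist_rpow_neg_le {s : ℝ} (hs : 0 < s) (z : α) :
    ENNReal.ofReal (infDist z F ^ (-s)) ≤ ENNReal.ofReal ((1 / 2 : ℝ) ^ (-s)) +
      ∑' k : ℕ, (thickening ((1 / 2) ^ k) F).indicator
        (fun _ => ENNReal.ofReal (((1 / 2 : ℝ) ^ (-s)) ^ (k + 2))) z := by
  rcases (infDist_nonneg (x := z) (s := F)).eq_or_lt with h0 | h0
  · -- `0 ^ (-s) = 0` in Mathlib
    simp [← h0, Real.zero_rpow (neg_ne_zero.2 hs.ne')]
  rcases le_or_gt (1 / 2) (infDist z F) with hfar | hnear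
  · exact le_add_right (ENNReal.ofReal_le_ofReal
      (Real.rpow_le_rpow_of_nonpos (by norm_num) hfar (by linarith)))
  obtain ⟨k, hk1, hk2⟩ := exists_nat_pow_near_of_lt_one (x := 2 * infDist z F) (y := 1 / 2)
    (by positivity) (by linarith) (by norm_num) (by norm_num)
  have hFne : F.Nonempty := nonempty_iff_ne_empty.2 fun hF => by simp [hF] at h0
  have hmem : z ∈ thickening ((1 / 2) ^ k) F := by
    rw [mem_thickening_iff_infDist_lt hFne]
    linarith
  refine le_add_left (le_trans ?_ (ENNReal.le_tsum k))
  rw [indicator_of_mem hmem, Real.rpow_pow_comm (by norm_num)]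
  refine ENNReal.ofReal_le_ofReal (Real.rpow_le_rpow_of_nonpos (by positivity) ?_ (by linarith))
  linarith [pow_succ (1 / 2 : ℝ) (k + 1)]

theorem integrable_infDist_rpow_neg [MeasurableSpace α] [OpensMeasurableSpace α] {μ : Measure α}
    [IsFiniteMeasure μ] {s : ℝ} (hs0 : 0 < s) (hs1 : s < 1)
    (hF : ∀ t, 0 < t → t ≤ 1 → μ (thickening t F) ≤ ENNReal.ofReal (C * t)) :
    Integrable (fun z => infDist z F ^ (-s)) μ := by
  set a : ℝ := (1 / 2 : ℝ) ^ (-s)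
  have ha : a / 2 < 1 := by
    have : a < (1 / 2) ^ (-1 : ℝ) :=
      Real.rpow_lt_rpow_of_exponent_gt (by norm_num) (by norm_num) (by linarith)
    norm_num [Real.rpow_neg_one] at this
    linarith
  have hterm : ∀ k : ℕ, ∫⁻ z, (thickening ((1 / 2) ^ k) F).indicator
      (fun _ => ENNReal.ofReal (a ^ (k + 2))) z ∂μ ≤
        ENNReal.ofReal (C * a ^ 2) * ENNReal.ofReal (a / 2) ^ k := by
    intro k
    rw [lintegral_indicator_const isOpen_thickening.measurableSet]
    calc ENNReal.ofReal (a ^ (k + 2)) * μ (thickening ((1 / 2) ^ k) F)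
        ≤ ENNReal.ofReal (a ^ (k + 2)) * ENNReal.ofReal (C * (1 / 2) ^ k) := by
          gcongr
          exact hF _ (by positivity) (pow_le_one₀ (by norm_num) (by norm_num))
      _ = ENNReal.ofReal (C * a ^ 2) * ENNReal.ofReal (a / 2) ^ k := by
          rw [← ENNReal.ofReal_pow (by positivity), ← ENNReal.ofReal_mul (by positivity),
            ← ENNReal.ofReal_mul' (by positivity)]
          congr 1
          ring
  refine ⟨((continuous_infDist_pt F).measurable.pow_const _).aestronglyMeasurable,
    (hasFiniteIntegral_iff_ofReal
      (Eventually.of_forall fun _ => Real.rpow_nonneg infDist_nonneg _)).2 ?_⟩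
  calc ∫⁻ z, ENNReal.ofReal (infDist z F ^ (-s)) ∂μ
      ≤ ∫⁻ z, ENNReal.ofReal a + ∑' k : ℕ, (thickening ((1 / 2) ^ k) F).indicator
          (fun _ => ENNReal.ofReal (a ^ (k + 2))) z ∂μ :=
        lintegral_mono (ofReal_infDist_rpow_neg_le hs0)
    _ ≤ ENNReal.ofReal a * μ univ +
          ∑' k : ℕ, ENNReal.ofReal (C * a ^ 2) * ENNReal.ofReal (a / 2) ^ k := by
        rw [lintegral_add_left measurable_const, lintegral_const, lintegral_tsum fun k =>
          (measurable_const.indicator isOpen_thickening.measurableSet).aemeasurable]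
        exact add_le_add le_rfl (ENNReal.tsum_le_tsum hterm)
    _ < ⊤ := by
        rw [ENNReal.tsum_mul_left, ENNReal.tsum_geometric]
        refine ENNReal.add_lt_top.2 ⟨ENNReal.mul_lt_top ENNReal.ofReal_lt_top
          (measure_lt_top μ _), ENNReal.mul_lt_top ENNReal.ofReal_lt_top ?_⟩
        rw [ENNReal.inv_lt_top, tsub_pos_iff_lt]
        exact ENNReal.ofReal_lt_one.2 ha

end MinkowskiContent

section Cubes

variable {d : ℕ}

theorem cubeAt_eq_preimage_pi (c : Ed d) (r : ℝ) :
    cubeAt d c r = (MeasurableEquiv.toLp 2 (Fin d → ℝ)).symm ⁻¹'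
      univ.pi fun i => Icc (c i - r) (c i + r) := by
  ext z
  simp only [cubeAt, mem_ofPred_eq, mem_preimage, mem_univ_pi, mem_Icc, abs_le,
    MeasurableEquiv.coe_toLp_symm]
  exact forall_congr' fun i => by constructor <;> intro h <;> constructor <;> linarith [h.1, h.2]

theorem measurableSet_cubeAt (c : Ed d) (r : ℝ) : MeasurableSet (cubeAt d c r) := by
  rw [cubeAt_eq_preimage_pi]
  exact (MeasurableEquiv.toLp 2 (Fin d → ℝ)).symm.measurable
    (MeasurableSet.univ_pi fun _ => measurableSet_Icc)

theorem volume_cubeAt (c : Ed d) (r : ℝ) :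
    volume (cubeAt d c r) = ENNReal.ofReal (2 * r) ^ d := by
  rw [cubeAt_eq_preimage_pi,
    (EuclideanSpace.volume_preserving_symm_measurableEquiv_toLp (Fin d)).measure_preimage
      (MeasurableSet.univ_pi fun _ => measurableSet_Icc).nullMeasurableSet,
    volume_pi_pi]
  simp [Real.volume_Icc, show ∀ a : ℝ, a + r - (a - r) = 2 * r from fun a => by ring]

theorem cubeAt_eq_preimage_sub (c : Ed d) (r : ℝ) :
    cubeAt d c r = (· - c) ⁻¹' cube d r := by
  ext z
  simp [cubeAt, cube]

theorem cube_eq_cubeAt_zero (r : ℝ) : cube d r = cubeAt d 0 r := by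
  simp [cubeAt_eq_preimage_sub]

theorem setIntegral_cubeAt (c : Ed d) (r : ℝ) (G : Ed d → ℝ) :
    ∫ z in cubeAt d c r, G z = ∫ w in cube d r, G (c + w) := by
  rw [cubeAt_eq_preimage_sub, ← (measurePreserving_sub_right volume c).setIntegral_preimage_emb
    (MeasurableEquiv.subRight c).measurableEmbedding (fun w => G (c + w))]
  simp

theorem integral_noiseMeasure_add {σ : ℝ} (hσ : 0 ≤ σ) (c : Ed d) (G : Ed d → ℝ) :
    ∫ w, G (c + w) ∂noiseMeasure d σ = ((2 * σ) ^ d)⁻¹ * ∫ z in cubeAt d c σ, G z := by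
  rw [noiseMeasure, integral_smul_measure, setIntegral_cubeAt, cube_eq_cubeAt_zero,
    volume_cubeAt, ← ENNReal.ofReal_pow (by positivity), ENNReal.toReal_inv,
    ENNReal.toReal_ofReal (by positivity), smul_eq_mul]

theorem tendsto_volume_symmDiff_cubeAt (c : Ed d) (r : ℝ) :
    Tendsto (fun c' => volume (cubeAt d c r ∆ cubeAt d c' r)) (𝓝 c) (𝓝 0) := by
  let translate : C(Ed d, C(Ed d, Ed d)) :=
    ContinuousMap.curry ⟨fun p : Ed d × Ed d => p.2 - p.1, by fun_prop⟩
  have hcube := cube_eq_cubeAt_zero (d := d) r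
  have key := tendsto_measure_symmDiff_preimage_nhds_zero (μ := volume) (ν := volume)
    (s := cube d r) (translate.continuous.tendsto c)
    (Eventually.of_forall fun c' => measurePreserving_sub_right volume c')
    (measurePreserving_sub_right volume c) (hcube ▸ measurableSet_cubeAt 0 r).nullMeasurableSet
    (by rw [hcube, volume_cubeAt]; exact ENNReal.pow_ne_top ENNReal.ofReal_ne_top)
  have htranslate : ∀ c', ⇑(translate c') = (· - c') := fun _ => rfl
  simpa only [htranslate, cubeAt_eq_preimage_sub, symmDiff_comm] using key

theorem continuousOn_of_abs_sub_le_volume_symmDiff_cubeAt {X : Set (Ed d)} {F : Ed d → ℝ}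
    {g : Ed d → Ed d} {r K : ℝ} (hg : ContinuousOn g X)
    (hF : ∀ x ∈ X, ∀ y ∈ X,
      |F x - F y| ≤ K * √(volume (cubeAt d (g x) r ∆ cubeAt d (g y) r)).toReal) :
    ContinuousOn F X := by
  intro x hx
  have hlim := (((ENNReal.tendsto_toReal ENNReal.zero_ne_top).comp
    ((tendsto_volume_symmDiff_cubeAt (g x) r).comp (hg x hx))).sqrt.const_mul K)
  rw [ContinuousWithinAt, tendsto_iff_dist_tendsto_zero]
  refine squeeze_zero' (Eventually.of_forall fun _ => dist_nonneg) ?_ (by simpa using hlim)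
  filter_upwards [self_mem_nhdsWithin] with y hy
  rw [Real.dist_eq, abs_sub_comm]
  exact hF x hx y hy

theorem exists_fin_abs_sub_div_le {N : ℕ} (hN : 0 < N) {r : ℝ} (hr : r ∈ Icc (0 : ℝ) 1) :
    ∃ k : Fin (N + 1), |r - k / N| ≤ 1 / N := by
  have hN' : (0 : ℝ) < N := by exact_mod_cast hN
  have hrN : 0 ≤ r * N := mul_nonneg hr.1 hN'.le
  have hk : ⌊r * N⌋₊ < N + 1 :=
    Nat.lt_succ_of_le (Nat.floor_le_of_le (by nlinarith [hr.2]))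
  refine ⟨⟨⌊r * N⌋₊, hk⟩, ?_⟩
  rw [show r - (⌊r * N⌋₊ : ℝ) / N = (r * N - ⌊r * N⌋₊) / N by field_simp, abs_div,
    abs_of_pos hN']
  gcongr
  rw [abs_of_nonneg (sub_nonneg.2 (Nat.floor_le hrN))]
  linarith [Nat.lt_floor_add_one (r * N)]

theorem volume_thickening_image_unitCube_le {m d : ℕ} (hm : m + 1 = d) {L : ℝ≥0}
    {g : (Fin m → ℝ) → Ed d} (hg : LipschitzWith L g) {t : ℝ} (ht0 : 0 < t) (ht1 : t ≤ 1) :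
    volume (thickening t (g '' univ.pi fun _ => Icc (0 : ℝ) 1)) ≤
      ENNReal.ofReal (3 ^ m * (2 * (L + 1)) ^ d * t) := by
  set N := ⌈1 / t⌉₊
  have hN : 0 < N := Nat.ceil_pos.2 (by positivity)
  have hNt : 1 / (N : ℝ) ≤ t := by
    rw [div_le_iff₀ (by exact_mod_cast hN), ← div_le_iff₀' ht0]
    exact Nat.le_ceil _
  have hN3 : (N : ℝ) + 1 ≤ 3 / t := by
    have h1 : (1 : ℝ) ≤ 1 / t := by rw [le_div_iff₀ ht0]; linarith
    linarith [Nat.ceil_lt_add_one (one_div_pos.2 ht0).le,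
      show 3 / t = 1 / t + 2 * (1 / t) by ring]
  let grid : (Fin m → Fin (N + 1)) → Ed d := fun a => g fun i => (a i : ℝ) / N
  have hcover : thickening t (g '' univ.pi fun _ => Icc (0 : ℝ) 1) ⊆
      ⋃ a, cubeAt d (grid a) ((L + 1) * t) := by
    intro z hz
    obtain ⟨_, ⟨q, hq, rfl⟩, hzq⟩ := mem_thickening_iff.1 hz
    choose a ha using fun i => exists_fin_abs_sub_div_le hN (hq i (mem_univ i))
    have hqa : dist q (fun i => (a i : ℝ) / N) ≤ t :=
      (dist_pi_le_iff ht0.le).2 fun i => (Real.dist_eq _ _ ▸ ha i).trans hNt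
    refine mem_iUnion.2 ⟨a, fun i => ?_⟩
    calc |z i - grid a i| ≤ dist z (grid a) := by
          rw [← Real.dist_eq]; exact PiLp.dist_apply_le z (grid a) i
      _ ≤ dist z (g q) + dist (g q) (grid a) := dist_triangle _ _ _
      _ ≤ t + L * t := add_le_add hzq.le ((hg.dist_le_mul _ _).trans (by gcongr))
      _ = (L + 1) * t := by ring
  calc volume (thickening t (g '' univ.pi fun _ => Icc (0 : ℝ) 1))
      ≤ ∑ a, volume (cubeAt d (grid a) ((L + 1) * t)) :=
        (measure_mono hcover).trans (measure_iUnion_fintype_le _ _)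
    _ = ENNReal.ofReal (((N : ℝ) + 1) ^ m * (2 * ((L + 1) * t)) ^ d) := by
        rw [ENNReal.ofReal_mul (by positivity), ENNReal.ofReal_pow (by positivity),
          ENNReal.ofReal_pow (by positivity), ← Nat.cast_add_one, ENNReal.ofReal_natCast]
        simp [volume_cubeAt]
    _ ≤ ENNReal.ofReal (3 ^ m * (2 * (L + 1)) ^ d * t) := by
        apply ENNReal.ofReal_le_ofReal
        calc ((N : ℝ) + 1) ^ m * (2 * ((L + 1) * t)) ^ d
            ≤ (3 / t) ^ m * (2 * ((L + 1) * t)) ^ d := by gcongr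
          _ = 3 ^ m * (2 * (L + 1)) ^ d * t := by
              subst hm; rw [div_pow, ← mul_assoc, mul_pow _ t, pow_succ t]; field_simp

end Cubes

namespace H1Data

variable {d : ℕ} (D : H1Data d) {x : Ed d}

theorem DfInv_apply_Df_apply (hx : x ∈ D.X \ D.Crit) (v : Ed d) : D.DfInv x (D.Df x v) = v :=
  congr($(D.inv_left x hx) v)

theorem Df_apply_DfInv_apply (hx : x ∈ D.X \ D.Crit) (v : Ed d) : D.Df x (D.DfInv x v) = v :=
  congr($(D.inv_right x hx) v)

theorem infDist_crit_pos (hd : 0 < d) (hx : x ∈ D.X \ D.Crit) : 0 < infDist x D.Crit := by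
  have : Nonempty (Fin d) := ⟨⟨0, hd⟩⟩
  obtain ⟨v, hv⟩ := exists_ne (0 : Ed d)
  refine infDist_nonneg.lt_of_ne fun h0 => hv ?_
  have hDf : D.Df x v = 0 := by
    have := (D.deriv_bound x hx v).2
    rwa [← h0, Real.zero_rpow (neg_ne_zero.2 D.beta_pos.ne'), mul_zero, zero_mul,
      norm_le_zero_iff] at this
  simpa [hDf] using (D.DfInv_apply_Df_apply hx v).symm

theorem crit_nonempty (hd : 0 < d) (hx : x ∈ D.X \ D.Crit) : D.Crit.Nonempty :=
  nonempty_iff_ne_empty.2 fun h => by simpa [h] using D.infDist_crit_pos hd hx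

theorem norm_DfInv_pos (hd : 0 < d) (hx : x ∈ D.X \ D.Crit) : 0 < ‖D.DfInv x‖ := by
  have : Nonempty (Fin d) := ⟨⟨0, hd⟩⟩
  obtain ⟨v, hv⟩ := exists_ne (0 : Ed d)
  refine norm_pos_iff.2 fun h0 => hv ?_
  simpa [h0] using (D.DfInv_apply_Df_apply hx v).symm

theorem norm_DfInv_le (hd : 0 < d) (hx : x ∈ D.X \ D.Crit) :
    ‖D.DfInv x‖ ≤ D.B * infDist x D.Crit ^ (-D.β) := by
  have hδ := D.infDist_crit_pos hd hx
  have hB := zero_lt_one.trans D.one_lt_B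
  refine ContinuousLinearMap.opNorm_le_bound _ (by positivity) fun u => ?_
  have hlow := (D.deriv_bound x hx (D.DfInv x u)).1
  rw [D.Df_apply_DfInv_apply hx, mul_assoc, inv_mul_le_iff₀ hB] at hlow
  rw [Real.rpow_neg hδ.le, mul_assoc, ← div_eq_inv_mul, ← mul_div_assoc,
    le_div_iff₀ (by positivity)]
  linarith

theorem continuousOn_log_norm_DfInv (hd : 0 < d) :
    ContinuousOn (fun z => Real.log ‖D.DfInv z‖) (D.X \ D.Crit) := by
  intro x hx
  have hδ := D.infDist_crit_pos hd hx
  have hlim : Tendsto (fun y => D.B / infDist x D.Crit ^ D.β * dist x y) (𝓝 x) (𝓝 0) := by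
    simpa using (((continuous_const.dist continuous_id : Continuous fun y => dist x y).tendsto
      x).const_mul (D.B / infDist x D.Crit ^ D.β))
  rw [ContinuousWithinAt, tendsto_iff_dist_tendsto_zero]
  refine squeeze_zero' (Eventually.of_forall fun _ => dist_nonneg) ?_
    (hlim.mono_left nhdsWithin_le_nhds)
  filter_upwards [self_mem_nhdsWithin, nhdsWithin_le_nhds (ball_mem_nhds x (half_pos hδ))]
    with y hy hyx
  rw [Real.dist_eq, abs_sub_comm]
  exact D.logHolder_inv x hx y hy (by rw [dist_comm]; exact (mem_ball.1 hyx).le)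

theorem exists_isCompact_crit_subset (hd : 0 < d) :
    ∃ F : Set (Ed d), ∃ C : ℝ, IsCompact F ∧ D.Crit ⊆ F ∧
      ∀ t, 0 < t → t ≤ 1 → volume (thickening t F) ≤ ENNReal.ofReal (C * t) := by
  obtain ⟨m, g, L, -, hg, hcrit⟩ := D.crit_structure
  refine ⟨_, m * (3 ^ (d - 1) * (2 * (L + 1)) ^ d), isCompact_iUnion fun i =>
    (isCompact_univ_pi fun _ => isCompact_Icc).image (hg i).continuous, hcrit, fun t ht0 ht1 => ?_⟩
  rw [thickening_iUnion]
  calc volume (⋃ i, thickening t (g i '' univ.pi fun _ => Icc (0 : ℝ) 1))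
      ≤ ∑ i, volume (thickening t (g i '' univ.pi fun _ => Icc (0 : ℝ) 1)) :=
        measure_iUnion_fintype_le _ _
    _ ≤ ∑ _i : Fin m, ENNReal.ofReal (3 ^ (d - 1) * (2 * (L + 1)) ^ d * t) :=
        Finset.sum_le_sum fun i _ =>
          volume_thickening_image_unitCube_le (Nat.sub_add_cancel hd) (hg i) ht0 ht1
    _ = ENNReal.ofReal (m * (3 ^ (d - 1) * (2 * (L + 1)) ^ d) * t) := by
        rw [Finset.sum_const, Finset.card_univ, Fintype.card_fin, nsmul_eq_mul,
          ← ENNReal.ofReal_natCast, ← ENNReal.ofReal_mul (by positivity)]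
        ring_nf

theorem exp_mul_log_norm_DfInv_le (hd : 0 < d) {θ : ℝ} (hθ : 0 ≤ θ) {F : Set (Ed d)}
    (hF : IsClosed F) (hcrit : D.Crit ⊆ F) {z : Ed d} (hz : z ∈ D.X \ F) :
    Real.exp (θ * Real.log ‖D.DfInv z‖) ≤ D.B ^ θ * infDist z F ^ (-(θ * D.β)) := by
  have hz' : z ∈ D.X \ D.Crit := ⟨hz.1, fun h => hz.2 (hcrit h)⟩
  have hzF : 0 < infDist z F :=
    (hF.notMem_iff_infDist_pos ((D.crit_nonempty hd hz').mono hcrit)).1 hz.2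
  have hB := zero_lt_one.trans D.one_lt_B
  calc Real.exp (θ * Real.log ‖D.DfInv z‖) = ‖D.DfInv z‖ ^ θ := by
        rw [Real.rpow_def_of_pos (D.norm_DfInv_pos hd hz'), mul_comm]
    _ ≤ (D.B * infDist z D.Crit ^ (-D.β)) ^ θ := by gcongr; exact D.norm_DfInv_le hd hz'
    _ = D.B ^ θ * infDist z D.Crit ^ (-(θ * D.β)) := by
        rw [Real.mul_rpow hB.le (Real.rpow_nonneg infDist_nonneg _),
          ← Real.rpow_mul infDist_nonneg]
        ring_nf
    _ ≤ D.B ^ θ * infDist z F ^ (-(θ * D.β)) := by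
        refine mul_le_mul_of_nonneg_left (Real.rpow_le_rpow_of_nonpos hzF
          (infDist_le_infDist_of_subset hcrit (D.crit_nonempty hd hz'))
          (neg_nonpos.2 (mul_nonneg hθ D.beta_pos.le))) (by positivity)

theorem integrableOn_exp_mul_log_norm_DfInv (hd : 0 < d) {θ : ℝ} (hθ : 0 < θ)
    (hθβ : θ * D.β < 1) :
    IntegrableOn (fun z => Real.exp (θ * Real.log ‖D.DfInv z‖)) D.X := by
  obtain ⟨F, C, hFc, hcrit, hF⟩ := D.exists_isCompact_crit_subset hd
  have hX := D.compact_X.isClosed.measurableSet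
  have : IsFiniteMeasure (volume.restrict D.X) :=
    isFiniteMeasure_restrict.2 D.compact_X.measure_lt_top.ne
  have hrestrict : volume.restrict D.X = volume.restrict (D.X \ F) :=
    Measure.restrict_congr_set
      (sdiff_null_ae_eq_self (measure_eq_zero_of_measure_thickening_le hF)).symm
  have hdom : Integrable (fun z => D.B ^ θ * infDist z F ^ (-(θ * D.β))) (volume.restrict D.X) :=
    (integrable_infDist_rpow_neg (mul_pos hθ D.beta_pos) hθβ fun t ht0 ht1 =>
      (Measure.restrict_apply_le _ _).trans (hF t ht0 ht1)).const_mul _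
  refine hdom.mono' ?_ ?_ <;> rw [hrestrict]
  · have hcont := (D.continuousOn_log_norm_DfInv hd).mono (sdiff_subset_sdiff_right hcrit)
    exact ContinuousOn.aestronglyMeasurable
      (Real.continuous_exp.comp_continuousOn (continuousOn_const.mul hcont))
      (hX.diff hFc.isClosed.measurableSet)
  · refine ae_restrict_of_forall_mem (hX.diff hFc.isClosed.measurableSet) fun z hz => ?_
    rw [Real.norm_of_nonneg (Real.exp_pos _).le]
    exact D.exp_mul_log_norm_DfInv_le hd hθ.le hFc.isClosed hcrit hz

end H1Data

theorem transferFun_eq_setIntegral_cubeAt {d : ℕ} (D : H1Data d) {σ : ℝ} (hσ : 0 ≤ σ) (θ : ℝ)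
    (h : Ed d → ℝ) (x : Ed d) :
    transferFun D σ θ h x = ((2 * σ) ^ d)⁻¹ *
      ∫ z in cubeAt d (D.f x) σ, Real.exp (θ * Real.log ‖D.DfInv z‖) * h z :=
  integral_noiseMeasure_add hσ (D.f x) fun z => Real.exp (θ * Real.log ‖D.DfInv z‖) * h z

/-- `P_θ` is well defined and bounded on `C⁰(X)`: `‖P_θ h‖ ≤ ‖h‖ ‖e^{θg}‖_{L¹}/(2σ)^d`,
a Hölder-type modulus of continuity in terms of the symmetric difference of the
noise cubes, and continuity of `P_θ h` on `X`. -/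
theorem transfer_operator_well_defined {d : ℕ} (hd : 0 < d) (D : H1Data d)
    (σn : ℝ) (hσn : 0 < σn)
    (hmaps : ∀ x ∈ D.X, ∀ w ∈ cube d σn, D.f x + w ∈ D.X)
    (θ : ℝ) (hθ : 0 < θ) (hθβ : θ < 1 / (2 * D.β)) :
    ∃ K > 0, ∀ h : Ed d → ℝ, Continuous h → ∀ M : ℝ, (∀ x ∈ D.X, |h x| ≤ M) →
      (∀ x ∈ D.X, |transferFun D σn θ h x| ≤
        M * (∫ z in D.X, Real.exp (θ * Real.log ‖D.DfInv z‖)) / (2 * σn) ^ d) ∧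
      (∀ x ∈ D.X, ∀ y ∈ D.X,
        |transferFun D σn θ h x - transferFun D σn θ h y| ≤
          K * M * Real.sqrt (∫ z in D.X, Real.exp (2 * θ * Real.log ‖D.DfInv z‖)) *
            Real.sqrt
              ((volume (symmDiff (cubeAt d (D.f x) σn) (cubeAt d (D.f y) σn))).toReal)) ∧
      ContinuousOn (transferFun D σn θ h) D.X := by
  set φ : Ed d → ℝ := fun z => Real.exp (θ * Real.log ‖D.DfInv z‖)
  have hsq : ∀ z, φ z ^ 2 = Real.exp (2 * θ * Real.log ‖D.DfInv z‖) := fun z => by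
    rw [← Real.exp_nat_mul]; ring_nf
  have hθβ' : 2 * θ * D.β < 1 := by
    rw [lt_div_iff₀ (mul_pos two_pos D.beta_pos)] at hθβ; linarith
  have hφ : IntegrableOn φ D.X := D.integrableOn_exp_mul_log_norm_DfInv hd hθ (by linarith)
  have hφ2 : IntegrableOn (fun z => φ z ^ 2) D.X := by
    simpa only [hsq] using D.integrableOn_exp_mul_log_norm_DfInv hd (by positivity) hθβ'
  have hcube : ∀ x ∈ D.X, cubeAt d (D.f x) σn ⊆ D.X := fun x hx z hz => by
    simpa using hmaps x hx (z - D.f x) (by rwa [cubeAt_eq_preimage_sub] at hz)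
  refine ⟨((2 * σn) ^ d)⁻¹, by positivity, fun h hh M hM => ?_⟩
  have hrep := transferFun_eq_setIntegral_cubeAt D hσn.le θ h
  have hφh : ∀ z ∈ D.X, |φ z * h z| ≤ M * φ z := fun z hz => by
    rw [abs_mul, abs_of_pos (Real.exp_pos _), mul_comm]
    exact mul_le_mul_of_nonneg_right (hM z hz) (Real.exp_pos _).le
  have hφ0 : ∀ z, 0 ≤ φ z := fun z => (Real.exp_pos _).le
  have hholder : ∀ x ∈ D.X, ∀ y ∈ D.X, |transferFun D σn θ h x - transferFun D σn θ h y| ≤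
      ((2 * σn) ^ d)⁻¹ * M * √(∫ z in D.X, Real.exp (2 * θ * Real.log ‖D.DfInv z‖)) *
        √(volume (cubeAt d (D.f x) σn ∆ cubeAt d (D.f y) σn)).toReal := fun x hx y hy => by
    rw [hrep, hrep, ← mul_sub, abs_mul, abs_of_pos (by positivity), mul_assoc, mul_assoc,
      mul_le_mul_iff_right₀ (by positivity), ← mul_assoc]
    simp_rw [← hsq]
    exact abs_setIntegral_sub_setIntegral_le_mul_sqrt ((abs_nonneg _).trans (hM x hx)) hφ0 hφ hφ2
      (hφ.aestronglyMeasurable.mul hh.aestronglyMeasurable) hφh (measurableSet_cubeAt _ _)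
      (measurableSet_cubeAt _ _) (hcube x hx) (hcube y hy) D.compact_X.measure_lt_top.ne
  refine ⟨fun x hx => ?_, hholder,
    continuousOn_of_abs_sub_le_volume_symmDiff_cubeAt D.cont_f hholder⟩
  rw [hrep, abs_mul, abs_of_pos (by positivity), inv_mul_eq_div]
  exact div_le_div_of_nonneg_right (abs_setIntegral_le_mul_setIntegral
    ((abs_nonneg _).trans (hM x hx)) hφ0 hφ hφh (measurableSet_cubeAt _ _) (hcube x hx))
    (by positivity)
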